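/- arXiv:1108.2499 — 9 statements merged into one kernel-verified Lean document; each statement's English description precedes it below -/
import Mathlib

section
/- Let (P, ⊴) be a partial order, A ⊆ P a maximal antichain, and A' ⊆ D(A) ∪ A an antichain (where D(A) is the downward closure of A). Then there exists an antichain A'' with A' ⊆ A'' ⊆ D(A) ∪ A such that A'' is a maximal antichain of the whole partial order P. -/
variable {P : Type*} [PartialOrder P]

/-- An antichain: a set of pairwise incomparable elements. -/
def IsAC (A : Set P) : Prop := ∀ i ∈ A, ∀ j ∈ A, ¬ i < j

/-- A maximal antichain: an antichain to which no element can be added. -/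
def IsMaxAC (A : Set P) : Prop := IsAC A ∧ ∀ x ∉ A, ¬ IsAC (insert x A)

/-- The (strict) downward closure of a set. -/
def dcl (A : Set P) : Set P := {i | ∃ j ∈ A, i < j}

/-- The (strict) upward closure of a set. -/
def ucl (A : Set P) : Set P := {i | ∃ j ∈ A, j < i}

/-! By Zorn's lemma `A'` extends to an antichain `M ⊆ D(A) ∪ A` that is maximal among such
antichains. If some `x` were incomparable with all of `M`, then `x ∉ D(A) ∪ A`, so by maximality
of `A` some `a ∈ A` lies strictly below `x`. This `a` lies in `D(A) ∪ A`, so by maximality of `M`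
it is comparable with some `b ∈ M`: `b < a` would give `b < x`, while `a < b` is impossible since
nothing in `D(A) ∪ A` lies strictly above an element of the antichain `A`. -/

section

variable {A B T : Set P} {a b x : P}

theorem isAC_insert_iff : IsAC (insert x B) ↔ IsAC B ∧ ∀ b ∈ B, ¬ b < x ∧ ¬ x < b := by
  refine ⟨fun h => ⟨fun i hi j hj => h i (.inr hi) j (.inr hj),
    fun b hb => ⟨h b (.inr hb) x (.inl rfl), h x (.inl rfl) b (.inr hb)⟩⟩, ?_⟩
  rintro ⟨hB, hx⟩ i (rfl | hi) j (rfl | hj)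
  exacts [lt_irrefl _, (hx j hj).2, (hx i hi).1, hB i hi j hj]

theorem exists_lt_or_gt_of_not_isAC_insert (hB : IsAC B) (h : ¬ IsAC (insert x B)) :
    ∃ b ∈ B, b < x ∨ x < b := by
  by_contra! hx
  exact h (isAC_insert_iff.2 ⟨hB, fun b hb => hx b hb⟩)

theorem isAC_sUnion {c : Set (Set P)} (hc : IsChain (· ⊆ ·) c) (h : ∀ B ∈ c, IsAC B) :
    IsAC (⋃₀ c) := by
  rintro i ⟨B, hB, hiB⟩ j ⟨C, hC, hjC⟩
  rcases hc.total hB hC with hBC | hCB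
  · exact h C hC i (hBC hiB) j hjC
  · exact h B hB i hiB j (hCB hjC)

theorem exists_maximal_isAC_subset (hB : IsAC B) (hBT : B ⊆ T) :
    ∃ M, B ⊆ M ∧ Maximal (fun C => C ⊆ T ∧ IsAC C) M := by
  refine zorn_subset_nonempty {C | C ⊆ T ∧ IsAC C} (fun c hcS hc _ => ?_) B ⟨hBT, hB⟩
  exact ⟨⋃₀ c, ⟨Set.sUnion_subset fun C hC => (hcS hC).1, isAC_sUnion hc fun C hC => (hcS hC).2⟩,
    fun _ => Set.subset_sUnion_of_mem⟩

theorem IsAC.not_lt_of_mem_dcl_union (hA : IsAC A) (ha : a ∈ A) (hb : b ∈ dcl A ∪ A) :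
    ¬ a < b := by
  intro hab
  rcases hb with ⟨a', ha', hba'⟩ | hb
  · exact hA a ha a' ha' (hab.trans hba')
  · exact hA a ha b hb hab

theorem IsMaxAC.isMaxAC_of_maximal_in_dcl_union (hA : IsMaxAC A)
    (hM : Maximal (fun C => C ⊆ dcl A ∪ A ∧ IsAC C) B) : IsMaxAC B := by
  refine ⟨hM.prop.2, fun x hxB hins => hxB (hM.mem_of_prop_insert ⟨?_, hins⟩)⟩
  obtain ⟨-, hx⟩ := isAC_insert_iff.1 hins
  have hx_mem : x ∈ dcl A ∪ A := by
    by_cases hxA : x ∈ A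
    · exact .inr hxA
    obtain ⟨a, ha, hax | hxa⟩ := exists_lt_or_gt_of_not_isAC_insert hA.1 (hA.2 x hxA)
    · have haB : a ∉ B := fun haB => (hx a haB).1 hax
      have hins_a : ¬ IsAC (insert a B) := fun h =>
        haB (hM.mem_of_prop_insert ⟨Set.insert_subset (.inr ha) hM.prop.1, h⟩)
      obtain ⟨b, hb, hba | hab⟩ := exists_lt_or_gt_of_not_isAC_insert hM.prop.2 hins_a
      · exact ((hx b hb).1 (hba.trans hax)).elim
      · exact (hA.1.not_lt_of_mem_dcl_union ha (hM.prop.1 hb) hab).elim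
    · exact .inl ⟨a, ha, hxa⟩
  exact Set.insert_subset hx_mem hM.prop.1

end

/-- Any antichain contained in `D(A) ∪ A`, for `A` a maximal antichain, extends to a
maximal antichain of `P` contained in `D(A) ∪ A`. -/
theorem stmt_1 (A : Set P) (hA : IsMaxAC A) (A' : Set P) (hA' : IsAC A')
    (hsub : A' ⊆ dcl A ∪ A) :
    ∃ A'' : Set P, A' ⊆ A'' ∧ A'' ⊆ dcl A ∪ A ∧ IsMaxAC A'' := by
  obtain ⟨M, hA'M, hM⟩ := exists_maximal_isAC_subset hA' hsub
  exact ⟨M, hA'M, hM.prop.1, hA.isMaxAC_of_maximal_in_dcl_union hM⟩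
end

section
/- Let (P, ⊴) be a finite partial order and A ⊆ P a maximal antichain with nonempty downward closure D(A). Then there exists a maximal antichain A' of P with A' ⊴ A and A' ≠ A, i.e., A' ⊆ D(A) ∪ A and A' strictly below A in the ordering on maximal antichains. -/
variable {P : Type*} [PartialOrder P]

/-!
Let `M` be the set of maximal elements of `D(A)` and keep those elements of `A` lying above no
element of `M`. The result is an antichain, since `D(A)` is downward closed and disjoint from `A`.
It is maximal: an element of `D(A)` lies below some element of `M` (finiteness), every element of
`A` lies above an element of the new antichain, and anything outside `D(A) ∪ A` lies above some
element of `A`. Finally it meets `D(A)` because `M` is nonempty, so it differs from `A`.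
-/

lemma mem_dcl_of_lt {A : Set P} {x y : P} (hy : y ∈ dcl A) (hxy : x < y) : x ∈ dcl A :=
  let ⟨a, ha, hya⟩ := hy
  ⟨a, ha, hxy.trans hya⟩

lemma IsAC.notMem_of_mem_dcl {A : Set P} (hA : IsAC A) {x : P} (hx : x ∈ dcl A) : x ∉ A :=
  fun hxA ↦ let ⟨a, ha, hxa⟩ := hx; hA x hxA a ha hxa

lemma IsMaxAC.exists_comparable {A : Set P} (hA : IsMaxAC A) {x : P} (hx : x ∉ A) :
    ∃ a ∈ A, x < a ∨ a < x := by
  by_contra! h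
  refine hA.2 x hx ?_
  rintro i (rfl | hi) j (rfl | hj) hij
  · exact hij.false
  · exact (h j hj).1 hij
  · exact (h i hi).2 hij
  · exact hA.1 i hi j hj hij

lemma isMaxAC_of_exists_comparable {A : Set P} (hA : IsAC A)
    (h : ∀ x ∉ A, ∃ a ∈ A, x < a ∨ a < x) : IsMaxAC A := by
  refine ⟨hA, fun x hx hins ↦ ?_⟩
  obtain ⟨a, ha, hxa | hax⟩ := h x hx
  · exact hins x (Set.mem_insert x A) a (Set.mem_insert_of_mem x ha) hxa
  · exact hins a (Set.mem_insert_of_mem x ha) x (Set.mem_insert x A) hax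

def lowerAC (A : Set P) : Set P :=
  {m | Maximal (· ∈ dcl A) m} ∪ {a ∈ A | ∀ m, Maximal (· ∈ dcl A) m → ¬ m < a}

lemma lowerAC_subset (A : Set P) : lowerAC A ⊆ dcl A ∪ A :=
  Set.union_subset_union (fun _ hm ↦ hm.prop) (fun _ ha ↦ ha.1)

lemma isAC_lowerAC {A : Set P} (hA : IsAC A) : IsAC (lowerAC A) := by
  rintro i (hi | ⟨hiA, -⟩) j (hj | ⟨hjA, hjM⟩) hij
  · exact hi.not_gt hj.prop hij
  · exact hjM i hi hij
  · exact hA.notMem_of_mem_dcl (mem_dcl_of_lt hj.prop hij) hiA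
  · exact hA i hiA j hjA hij

lemma exists_lowerAC_le {A : Set P} {a : P} (ha : a ∈ A) : ∃ z ∈ lowerAC A, z ≤ a := by
  by_cases h : ∀ m, Maximal (· ∈ dcl A) m → ¬ m < a
  · exact ⟨a, Or.inr ⟨ha, h⟩, le_rfl⟩
  · push Not at h
    obtain ⟨m, hm, hma⟩ := h
    exact ⟨m, Or.inl hm, hma.le⟩

lemma exists_lowerAC_ge [Finite P] {A : Set P} {x : P} (hx : x ∈ dcl A) :
    ∃ m ∈ lowerAC A, x ≤ m :=
  let ⟨m, hxm, hm⟩ := Finite.exists_le_maximal hx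
  ⟨m, Or.inl hm, hxm⟩

lemma isMaxAC_lowerAC [Finite P] {A : Set P} (hA : IsMaxAC A) : IsMaxAC (lowerAC A) := by
  refine isMaxAC_of_exists_comparable (isAC_lowerAC hA.1) fun x hx ↦ ?_
  by_cases hxD : x ∈ dcl A
  · obtain ⟨m, hm, hxm⟩ := exists_lowerAC_ge hxD
    exact ⟨m, hm, Or.inl (hxm.lt_of_ne (by rintro rfl; exact hx hm))⟩
  by_cases hxA : x ∈ A
  · obtain ⟨z, hz, hzx⟩ := exists_lowerAC_le hxA
    exact ⟨z, hz, Or.inr (hzx.lt_of_ne (by rintro rfl; exact hx hz))⟩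
  obtain ⟨a, ha, hxa | hax⟩ := hA.exists_comparable hxA
  · exact absurd ⟨a, ha, hxa⟩ hxD
  · obtain ⟨z, hz, hza⟩ := exists_lowerAC_le ha
    exact ⟨z, hz, Or.inr (hza.trans_lt hax)⟩

lemma lowerAC_ne [Finite P] {A : Set P} (hA : IsAC A) (hD : (dcl A).Nonempty) :
    lowerAC A ≠ A := by
  obtain ⟨x, hx⟩ := hD
  obtain ⟨m, -, hm⟩ := Finite.exists_le_maximal (p := (· ∈ dcl A)) hx
  intro h
  exact hA.notMem_of_mem_dcl hm.prop (h ▸ (Or.inl hm : m ∈ lowerAC A))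

/-- In a finite partial order, a maximal antichain with nonempty downward closure has a
maximal antichain strictly below it. -/
theorem stmt_2 [Fintype P] (A : Set P) (hA : IsMaxAC A) (hD : (dcl A).Nonempty) :
    ∃ A' : Set P, IsMaxAC A' ∧ A' ⊆ dcl A ∪ A ∧ A' ≠ A :=
  ⟨lowerAC A, isMaxAC_lowerAC hA, lowerAC_subset A, lowerAC_ne hA.1 hD⟩
end

section
/- (Dilworth's Theorem) Let n < ω and let (P, ⊴) be a finite partial order such that every antichain A ⊆ P satisfies |A| ≤ n. Then P is the disjoint union of at most n chains. -/
/-!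
Galvin's induction. Remove a maximal element `a` of `s`; by induction `s \ {a}`, of width `w`,
is partitioned into `w` chains `C k`. Every antichain of size `w` meets every `C k`, so each `C k`
has a largest element `x k` lying on such an antichain, and the `x k` form an antichain. If no
`x k` lies below `a`, adding `a` to them gives an antichain of size `w + 1`, and `{a}` is one more
chain. Otherwise `x k < a` for some `k`, and the chain `{a} ∪ {y ∈ C k | y ≤ x k}` meets every
antichain of size `w`, so its complement has width less than `w` and is covered by induction.
-/

variable {P : Type*} [PartialOrder P]

open Finset Function

open scoped Classical

noncomputable def Finset.width (s : Finset P) : ℕ :=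
  (s.powerset.filter fun t : Finset P => IsAntichain (· ≤ ·) (t : Set P)).sup card

def IsMaximumAntichain (s t : Finset P) : Prop :=
  t ⊆ s ∧ IsAntichain (· ≤ ·) (t : Set P) ∧ #t = s.width

def OnMaximumAntichain (s : Finset P) (y : P) : Prop :=
  ∃ t, IsMaximumAntichain s t ∧ y ∈ t

namespace Finset

variable {s t : Finset P}

lemma card_le_width (hts : t ⊆ s) (ht : IsAntichain (· ≤ ·) (t : Set P)) : #t ≤ s.width :=
  le_sup (f := card) (mem_filter.2 ⟨mem_powerset.2 hts, ht⟩)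

lemma exists_isMaximumAntichain (s : Finset P) : ∃ t, IsMaximumAntichain s t := by
  obtain ⟨t, ht, hcard⟩ := exists_mem_eq_sup
    (s.powerset.filter fun t : Finset P => IsAntichain (· ≤ ·) (t : Set P))
    ⟨∅, by simp⟩ card
  rw [mem_filter, mem_powerset] at ht
  exact ⟨t, ht.1, ht.2, hcard.symm⟩

lemma width_mono (h : s ⊆ t) : s.width ≤ t.width := by
  obtain ⟨u, hus, hu, hcard⟩ := s.exists_isMaximumAntichain
  exact hcard ▸ card_le_width (hus.trans h) hu

end Finset

lemma IsChain.exists_isGreatest {s : Set P} (hs : IsChain (· ≤ ·) s) (hfin : s.Finite)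
    (hne : s.Nonempty) : ∃ x, IsGreatest s x := by
  obtain ⟨x, hx⟩ := hfin.exists_maximal hne
  refine ⟨x, hx.1, fun y hy => ?_⟩
  rcases hs.total hx.1 hy with hxy | hyx
  · exact hx.2 hy hxy
  · exact hyx

structure IsChainPartition {ι : Type*} (s : Finset P) (c : ι → Finset P) : Prop where
  isChain : ∀ k, IsChain (· ≤ ·) (c k : Set P)
  pairwise_disjoint : Pairwise (Disjoint on c)
  mem_iff : ∀ x, x ∈ s ↔ ∃ k, x ∈ c k

namespace IsChainPartition

variable {ι κ : Type*} {s : Finset P} {c : ι → Finset P}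

lemma empty : IsChainPartition (∅ : Finset P) fun _ : ι => ∅ where
  isChain _ := by simp
  pairwise_disjoint _ _ _ := disjoint_bot_left
  mem_iff _ := by simp

lemma subset (hc : IsChainPartition s c) (k : ι) : c k ⊆ s :=
  fun x hx => (hc.mem_iff x).2 ⟨k, hx⟩

lemma extend (hc : IsChainPartition s c) {f : ι → κ} (hf : Injective f) :
    IsChainPartition s (Function.extend f c fun _ => ∅) := by
  have hcases : ∀ j, (∃ k, f k = j) ∨ Function.extend f c (fun _ => ∅) j = ∅ := fun j =>
    (em _).imp_right (extend_apply' _ _ j)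
  refine ⟨fun j => ?_, fun j j' hjj' => ?_, fun x => ?_⟩
  · rcases hcases j with ⟨k, rfl⟩ | hj
    · simpa [hf.extend_apply] using hc.isChain k
    · simp [hj]
  · rcases hcases j with ⟨k, rfl⟩ | hj
    · rcases hcases j' with ⟨k', rfl⟩ | hj'
      · simpa [onFun, hf.extend_apply] using hc.pairwise_disjoint (hf.ne_iff.1 hjj')
      · simp [onFun, hj']
    · simp [onFun, hj]
  · refine (hc.mem_iff x).trans ⟨fun ⟨k, hk⟩ => ⟨f k, by rwa [hf.extend_apply]⟩, fun ⟨j, hj⟩ => ?_⟩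
    rcases hcases j with ⟨k, rfl⟩ | hj'
    · exact ⟨k, by rwa [hf.extend_apply] at hj⟩
    · simp [hj'] at hj

lemma exists_fin {m n : ℕ} {c : Fin m → Finset P} (hc : IsChainPartition s c) (h : m ≤ n) :
    ∃ d : Fin n → Finset P, IsChainPartition s d :=
  ⟨_, hc.extend (Fin.castLE_injective h)⟩

lemma cons {m : ℕ} {c : Fin m → Finset P} (hc : IsChainPartition s c) {K : Finset P}
    (hK : IsChain (· ≤ ·) (K : Set P)) (hKs : Disjoint K s) :
    IsChainPartition (K ∪ s) (Fin.cons K c : Fin (m + 1) → Finset P) := by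
  refine ⟨Fin.cases hK hc.isChain, ?_, fun x => ?_⟩
  · intro i j hij
    induction i using Fin.cases <;> induction j using Fin.cases
    · exact absurd rfl hij
    · exact hKs.mono_right (hc.subset _)
    · exact (hKs.mono_right (hc.subset _)).symm
    · exact hc.pairwise_disjoint (ne_of_apply_ne Fin.succ hij)
  · simp [Fin.exists_fin_succ, hc.mem_iff]

lemma cons_insert {m : ℕ} {d : Fin m → Finset P} {L : Finset P} {a : P}
    (hd : IsChainPartition (s \ L) d) (hL : IsChain (· ≤ ·) (L : Set P)) (hLs : L ⊆ s)
    (has : a ∉ s) (hLa : ∀ y ∈ L, y ≤ a) :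
    IsChainPartition (insert a s) (Fin.cons (insert a L) d : Fin (m + 1) → Finset P) := by
  have hunion : insert a L ∪ (s \ L) = insert a s := by
    rw [insert_union, union_sdiff_of_subset hLs]
  have hK : IsChain (· ≤ ·) (↑(insert a L) : Set P) := by
    rw [coe_insert]
    exact hL.insert fun y hy _ => Or.inr (hLa y hy)
  exact hunion ▸ hd.cons hK
    (disjoint_insert_left.2 ⟨fun h => has (sdiff_subset h), disjoint_sdiff⟩)

section Fintype

variable [Fintype ι] {t : Finset P}

lemma exists_mem_of_isMaximumAntichain (hc : IsChainPartition s c)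
    (hw : Fintype.card ι ≤ s.width) (ht : IsMaximumAntichain s t) (k : ι) : ∃ y ∈ t, y ∈ c k := by
  by_contra! hk
  have hcover : t ⊆ (univ.erase k).biUnion fun j => t ∩ c j := by
    intro y hy
    obtain ⟨j, hj⟩ := (hc.mem_iff y).1 (ht.1 hy)
    have hjk : j ≠ k := by rintro rfl; exact hk y hy hj
    exact mem_biUnion.2 ⟨j, mem_erase.2 ⟨hjk, mem_univ j⟩, mem_inter.2 ⟨hy, hj⟩⟩
  have hle_one : ∀ j, #(t ∩ c j) ≤ 1 := fun j => card_le_one_iff_subsingleton.2 <| by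
    rw [coe_inter]
    exact inter_subsingleton_of_isAntichain_of_isChain ht.2.1 (hc.isChain j)
  have hcard : #t ≤ Fintype.card ι - 1 := calc
    #t ≤ ∑ j ∈ univ.erase k, #(t ∩ c j) := (card_le_card hcover).trans card_biUnion_le
    _ ≤ ∑ j ∈ univ.erase k, 1 := sum_le_sum fun j _ => hle_one j
    _ = Fintype.card ι - 1 := by simp [card_erase_of_mem]
  have hpos : 0 < Fintype.card ι := Fintype.card_pos_iff.2 ⟨k⟩
  have := ht.2.2
  omega

lemma exists_isGreatest (hc : IsChainPartition s c) (hw : Fintype.card ι ≤ s.width) (k : ι) :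
    ∃ x, IsGreatest {y | y ∈ c k ∧ OnMaximumAntichain s y} x := by
  obtain ⟨t, ht⟩ := s.exists_isMaximumAntichain
  obtain ⟨y, hyt, hyc⟩ := hc.exists_mem_of_isMaximumAntichain hw ht k
  exact ((hc.isChain k).mono fun _ h => h.1).exists_isGreatest
    ((c k).finite_toSet.subset fun _ h => h.1) ⟨y, hyc, t, ht, hyt⟩

variable {x : ι → P}

lemma exists_mem_le (hc : IsChainPartition s c) (hw : Fintype.card ι ≤ s.width)
    (hx : ∀ k, IsGreatest {y | y ∈ c k ∧ OnMaximumAntichain s y} (x k))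
    (ht : IsMaximumAntichain s t) (k : ι) : ∃ y ∈ t, y ∈ c k ∧ y ≤ x k := by
  obtain ⟨y, hyt, hyc⟩ := hc.exists_mem_of_isMaximumAntichain hw ht k
  exact ⟨y, hyt, hyc, (hx k).2 ⟨hyc, t, ht, hyt⟩⟩

lemma not_lt_of_isGreatest (hc : IsChainPartition s c) (hw : Fintype.card ι ≤ s.width)
    (hx : ∀ k, IsGreatest {y | y ∈ c k ∧ OnMaximumAntichain s y} (x k))
    (k l : ι) : ¬ x k < x l := by
  intro hlt
  obtain ⟨-, t, ht, hlt'⟩ := (hx l).1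
  obtain ⟨y, hyt, -, hyk⟩ := hc.exists_mem_le hw hx ht k
  exact ht.2.1.not_lt hyt hlt' (hyk.trans_lt hlt)

lemma card_lt_width_insert (hc : IsChainPartition s c) (hw : Fintype.card ι ≤ s.width)
    (hx : ∀ k, IsGreatest {y | y ∈ c k ∧ OnMaximumAntichain s y} (x k)) {a : P}
    (has : a ∉ s) (hmax : ∀ y ∈ s, ¬ a < y) (hxa : ∀ k, ¬ x k < a) :
    Fintype.card ι < (insert a s).width := by
  have hxs : ∀ k, x k ∈ s := fun k => hc.subset k (hx k).1.1
  have hinj : Injective x := fun k l hkl => by_contra fun hne =>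
    disjoint_left.1 (hc.pairwise_disjoint hne) (hx k).1.1 (hkl ▸ (hx l).1.1)
  have hanti : IsAntichain (· ≤ ·) (↑(insert a (univ.image x)) : Set P) := by
    rw [coe_insert, coe_image, coe_univ, Set.image_univ]
    refine IsAntichain.insert ?_ ?_ ?_
    · rintro _ ⟨k, rfl⟩ _ ⟨l, rfl⟩ hne hle
      exact hc.not_lt_of_isGreatest hw hx k l (hle.lt_of_ne hne)
    · rintro _ ⟨k, rfl⟩ hne hle
      exact hxa k (hle.lt_of_ne hne.symm)
    · rintro _ ⟨k, rfl⟩ hne hle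
      exact hmax _ (hxs k) (hle.lt_of_ne hne)
  have hcard : #(insert a (univ.image x)) = Fintype.card ι + 1 := by
    rw [card_insert_of_notMem, card_image_of_injective _ hinj, card_univ]
    simp only [mem_image, mem_univ, true_and, not_exists]
    exact fun k hk => has (hk ▸ hxs k)
  calc Fintype.card ι < #(insert a (univ.image x)) := by omega
    _ ≤ _ := card_le_width (insert_subset_insert a (image_subset_iff.2 fun k _ => hxs k)) hanti

lemma width_sdiff_lt (hc : IsChainPartition s c) (hw : Fintype.card ι ≤ s.width)
    (hx : ∀ k, IsGreatest {y | y ∈ c k ∧ OnMaximumAntichain s y} (x k)) (k : ι) :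
    (s \ {y ∈ c k | y ≤ x k}).width < s.width := by
  by_contra! hle
  obtain ⟨t, hts, ht, hcard⟩ := (s \ {y ∈ c k | y ≤ x k}).exists_isMaximumAntichain
  have htmax : IsMaximumAntichain s t := ⟨hts.trans sdiff_subset, ht,
    le_antisymm (card_le_width (hts.trans sdiff_subset) ht) (hcard ▸ hle)⟩
  obtain ⟨y, hyt, hyc, hyx⟩ := hc.exists_mem_le hw hx htmax k
  exact (mem_sdiff.1 (hts hyt)).2 (mem_filter.2 ⟨hyc, hyx⟩)

end Fintype

end IsChainPartition

namespace Finset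

lemma exists_isChainPartition_insert {s : Finset P} {a : P} (has : a ∉ s)
    (hmax : ∀ y ∈ s, ¬ a < y)
    (ih : ∀ t ⊆ s, ∃ c : Fin t.width → Finset P, IsChainPartition t c) :
    ∃ c : Fin (insert a s).width → Finset P, IsChainPartition (insert a s) c := by
  obtain ⟨c, hc⟩ := ih s Subset.rfl
  have hw : Fintype.card (Fin s.width) ≤ s.width := (Fintype.card_fin _).le
  choose x hx using hc.exists_isGreatest hw
  by_cases hxa : ∃ k, x k < a
  · obtain ⟨k, hk⟩ := hxa
    obtain ⟨d, hd⟩ := ih (s \ {y ∈ c k | y ≤ x k}) sdiff_subset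
    refine (hd.cons_insert ((hc.isChain k).mono (coe_subset.2 (filter_subset _ _)))
      ((filter_subset _ _).trans (hc.subset k)) has
      fun y hy => (mem_filter.1 hy).2.trans hk.le).exists_fin ?_
    calc _ + 1 ≤ s.width := hc.width_sdiff_lt hw hx k
      _ ≤ _ := width_mono (subset_insert a s)
  · push Not at hxa
    have hc' : IsChainPartition (s \ ∅) c := by rwa [sdiff_empty]
    refine (hc'.cons_insert (by simp) (empty_subset s) has (by simp)).exists_fin ?_
    simpa using hc.card_lt_width_insert hw hx has hmax hxa

theorem exists_isChainPartition_fin_width (s : Finset P) :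
    ∃ c : Fin s.width → Finset P, IsChainPartition s c := by
  induction s using Finset.strongInduction with | H s ih => ?_
  rcases s.eq_empty_or_nonempty with rfl | hne
  · exact ⟨_, .empty⟩
  obtain ⟨a, ha⟩ := s.exists_maximal hne
  rw [← insert_erase ha.1]
  exact exists_isChainPartition_insert (notMem_erase a s)
    (fun y hy => ha.not_gt (mem_of_mem_erase hy))
    fun t ht => ih t (ht.trans_ssubset (erase_ssubset ha.1))

end Finset

/-- Dilworth's theorem: a finite partial order all of whose antichains have size at most
`n` is a disjoint union of at most `n` chains. -/
theorem stmt_4 [Fintype P] (n : ℕ) (h : ∀ A : Set P, IsAC A → A.ncard ≤ n) :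
    ∃ c : Fin n → Set P, (∀ k, IsChain (· ≤ ·) (c k)) ∧
      (∀ k l, k ≠ l → Disjoint (c k) (c l)) ∧ (⋃ k, c k) = Set.univ := by
  obtain ⟨t, -, ht, hcard⟩ := (univ : Finset P).exists_isMaximumAntichain
  have hwidth : (univ : Finset P).width ≤ n := by
    simpa [hcard] using h t fun i hi j hj hij => ht.not_lt hi hj hij
  obtain ⟨c, hc⟩ := (univ : Finset P).exists_isChainPartition_fin_width
  obtain ⟨d, hd⟩ := hc.exists_fin hwidth
  refine ⟨fun k => d k, hd.isChain, fun k l hkl => disjoint_coe.2 (hd.pairwise_disjoint hkl), ?_⟩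
  ext x
  simpa using (hd.mem_iff x).1 (mem_univ x)
end

section
/- Let (P, ⊴) be a finite partial order, f an N-indiscernible coloring, t ∈ {0,1}, and C ⊆ f⁻¹(t) a chain. Then there exist elements i₀ ⊴ i'₀ ⊴ i₁ ⊴ i'₁ ⊴ ... ⊴ i_K ⊴ i'_K of C with K ≤ N such that C ⊆ ⋃_{n ≤ K} [i_n, i'_n]_P ⊆ f⁻¹(t), where [i, i']_P = {j ∈ P : i ⊴ j ⊴ i'}. -/
variable {P : Type*} [PartialOrder P]

/-- An `N`-indiscernible coloring: every antichain has at most `N` elements of one of the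
two colors, and no chain alternates colors more than `2N+1` times. -/
def IsIndiscColoring (N : ℕ) (f : P → ZMod 2) : Prop :=
  (∀ A : Set P, IsAC A → ∃ t : ZMod 2, (A ∩ f ⁻¹' {t}).ncard ≤ N) ∧
  ¬ ∃ g : ℕ → P, (∀ ℓ < 2 * N + 1, g ℓ < g (ℓ + 1)) ∧
      (∀ ℓ < 2 * N + 1, f (g ℓ) ≠ f (g (ℓ + 1)))

/-!
Cover the chain greedily: starting from its least element `a₀`, take the largest `b₀ ∈ C` with
`[a₀, b₀] ⊆ f⁻¹(t)`, and repeat on the part of `C` above `b₀`. By maximality of `b₀`, each new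
interval start `a₁` has an element `x₀ ∈ [a₀, a₁]` of the other color, so `K + 1` intervals yield
a chain `a₀ < x₀ < a₁ < ⋯ < x_{K-1} < a_K` alternating colors `2K` times; indiscernibility
forces `2K ≤ 2N`.
-/

open Set

section Cover

variable {S C : Set P}

theorem IsChain.exists_isLeast (hC : IsChain (· ≤ ·) C) (hfin : C.Finite) (hne : C.Nonempty) :
    ∃ a, IsLeast C a := by
  obtain ⟨a, ha⟩ := hfin.exists_minimal hne
  refine ⟨a, ha.prop, fun c hc => ?_⟩
  exact (hC.total ha.prop hc).elim id (ha.2 hc)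

theorem IsChain.le_or_lt {a b : P} (hC : IsChain (· ≤ ·) C) (ha : a ∈ C) (hb : b ∈ C) :
    a ≤ b ∨ b < a := by
  rcases hC.total ha hb with h | h
  · exact .inl h
  · exact h.eq_or_lt.imp Eq.ge id

theorem IsChain.exists_maximal_initial_Icc_subset (hC : IsChain (· ≤ ·) C) (hfin : C.Finite)
    (hCS : C ⊆ S) (hne : C.Nonempty) :
    ∃ a ∈ C, ∃ b ∈ C, a ∈ lowerBounds C ∧ Icc a b ⊆ S ∧ ∀ c ∈ C, b < c → ∃ x ∈ Icc a c, x ∉ S := by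
  obtain ⟨a, haC, ha⟩ := hC.exists_isLeast hfin hne
  have haB : a ∈ {c ∈ C | Icc a c ⊆ S} := ⟨haC, by simpa using hCS haC⟩
  obtain ⟨b, -, hb⟩ := (hfin.subset (sep_subset _ _)).exists_le_maximal haB
  refine ⟨a, haC, b, hb.prop.1, ha, hb.prop.2, fun c hc hbc => ?_⟩
  by_contra! hcS
  exact hb.not_gt ⟨hc, hcS⟩ hbc

theorem IsChain.exists_Icc_cover (hC : IsChain (· ≤ ·) C) (hfin : C.Finite) (hCS : C ⊆ S)
    (hne : C.Nonempty) :
    ∃ K, ∃ a b x : ℕ → P,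
      (∀ n ≤ K, a n ∈ C ∧ b n ∈ C ∧ a n ≤ b n) ∧
      (∀ n < K, b n ≤ a (n + 1)) ∧
      (∀ n < K, a n ≤ x n ∧ x n ≤ a (n + 1) ∧ x n ∉ S) ∧
      C ⊆ (⋃ n ∈ Iic K, Icc (a n) (b n)) ∧
      ∀ n ≤ K, Icc (a n) (b n) ⊆ S := by
  induction hk : C.ncard using Nat.strong_induction_on generalizing C with
  | _ k ih =>
  obtain ⟨a₀, ha₀, b₀, hb₀, hleast, hS₀, hgap⟩ :=
    hC.exists_maximal_initial_Icc_subset hfin hCS hne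
  have hab₀ : a₀ ≤ b₀ := hleast hb₀
  set C' := {c ∈ C | b₀ < c}
  rcases C'.eq_empty_or_nonempty with hC' | hC'
  · refine ⟨0, fun _ => a₀, fun _ => b₀, fun _ => a₀, fun _ _ => ⟨ha₀, hb₀, hab₀⟩,
      fun n hn => absurd hn n.not_lt_zero, fun n hn => absurd hn n.not_lt_zero,
      fun c hc => mem_iUnion₂_of_mem (mem_Iic.2 le_rfl) ⟨hleast hc, ?_⟩, fun _ _ => hS₀⟩
    exact (hC.le_or_lt hc hb₀).resolve_right fun h => eq_empty_iff_forall_notMem.1 hC' c ⟨hc, h⟩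
  have hlt : C'.ncard < k := hk ▸ ncard_lt_ncard
    ((ssubset_iff_of_subset (sep_subset _ _)).2 ⟨a₀, ha₀, fun h => hab₀.not_gt h.2⟩) hfin
  obtain ⟨K, a, b, x, hab, hba, hx, hcov, hS⟩ :=
    ih _ hlt (hC.mono (sep_subset _ _)) (hfin.subset (sep_subset _ _))
      (fun c hc => hCS hc.1) hC' rfl
  have ha0 : a 0 ∈ C' := (hab 0 K.zero_le).1
  obtain ⟨x₀, ⟨hax₀, hxa₀⟩, hx₀S⟩ := hgap (a 0) ha0.1 ha0.2
  refine ⟨K + 1, fun | 0 => a₀ | n + 1 => a n, fun | 0 => b₀ | n + 1 => b n,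
    fun | 0 => x₀ | n + 1 => x n, ?_, ?_, ?_, ?_, ?_⟩
  · rintro (_ | n) hn
    · exact ⟨ha₀, hb₀, hab₀⟩
    · obtain ⟨han, hbn, habn⟩ := hab n (by omega)
      exact ⟨han.1, hbn.1, habn⟩
  · rintro (_ | n) hn
    · exact ha0.2.le
    · exact hba n (by omega)
  · rintro (_ | n) hn
    · exact ⟨hax₀, hxa₀, hx₀S⟩
    · exact hx n (by omega)
  · intro c hc
    rcases hC.le_or_lt hc hb₀ with h | h
    · exact mem_iUnion₂_of_mem (show 0 ∈ Iic (K + 1) from Nat.zero_le _) ⟨hleast hc, h⟩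
    · obtain ⟨n, hn, hcn⟩ := mem_iUnion₂.1 (hcov ⟨hc, h⟩)
      exact mem_iUnion₂_of_mem (show n + 1 ∈ Iic (K + 1) by simpa using hn) hcn
  · rintro (_ | n) hn
    · exact hS₀
    · exact hS n (by omega)

end Cover

theorem exists_alternating_chain {β : Type*} (f : P → β) (t : β) (K : ℕ) (a x : ℕ → P)
    (ha : ∀ n ≤ K, f (a n) = t) (hx : ∀ n < K, a n ≤ x n ∧ x n ≤ a (n + 1) ∧ f (x n) ≠ t) :
    ∃ g : ℕ → P, ∀ ℓ < 2 * K, g ℓ < g (ℓ + 1) ∧ f (g ℓ) ≠ f (g (ℓ + 1)) := by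
  let g : ℕ → P := fun ℓ => if Even ℓ then a (ℓ / 2) else x (ℓ / 2)
  have hg_even : ∀ n, g (2 * n) = a n := fun n => by simp [g]
  have hg_odd : ∀ n, g (2 * n + 1) = x n := fun n => by simp [g, Nat.mul_add_div]
  have hstep : ∀ ℓ < 2 * K, g ℓ ≤ g (ℓ + 1) ∧ f (g ℓ) ≠ f (g (ℓ + 1)) := by
    intro ℓ hℓ
    obtain ⟨n, rfl | rfl⟩ := Nat.even_or_odd' ℓ
    · obtain ⟨hax, -, hfx⟩ := hx n (by omega)
      rw [hg_even, hg_odd, ha n (by omega)]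
      exact ⟨hax, hfx.symm⟩
    · obtain ⟨-, hxa, hfx⟩ := hx n (by omega)
      rw [hg_odd, show 2 * n + 1 + 1 = 2 * (n + 1) by ring, hg_even, ha (n + 1) (by omega)]
      exact ⟨hxa, hfx⟩
  exact ⟨g, fun ℓ hℓ => ⟨(hstep ℓ hℓ).1.lt_of_ne fun h => (hstep ℓ hℓ).2 (congrArg f h),
    (hstep ℓ hℓ).2⟩⟩

/-- A (nonempty) chain `C ⊆ f⁻¹(t)` is covered by at most `N+1` closed intervals
`[i_n, i'_n]` with endpoints in `C`, all contained in `f⁻¹(t)`. -/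
theorem stmt_8 [Fintype P] (N : ℕ) (f : P → ZMod 2) (hf : IsIndiscColoring N f)
    (t : ZMod 2) (C : Set P) (hC : IsChain (· ≤ ·) C) (hCt : C ⊆ f ⁻¹' {t})
    (hne : C.Nonempty) :
    ∃ K ≤ N, ∃ a b : ℕ → P,
      (∀ n ≤ K, a n ∈ C ∧ b n ∈ C ∧ a n ≤ b n) ∧
      (∀ n < K, b n ≤ a (n + 1)) ∧
      C ⊆ (⋃ n ∈ Set.Iic K, Set.Icc (a n) (b n)) ∧
      (⋃ n ∈ Set.Iic K, Set.Icc (a n) (b n)) ⊆ f ⁻¹' {t} := by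
  obtain ⟨K, a, b, x, hab, hba, hx, hcov, hS⟩ := hC.exists_Icc_cover C.toFinite hCt hne
  refine ⟨K, ?_, a, b, hab, hba, hcov, iUnion₂_subset hS⟩
  by_contra! hNK
  obtain ⟨g, hg⟩ := exists_alternating_chain f t K a x (fun n hn => hCt (hab n hn).1) hx
  exact hf.2 ⟨g, fun ℓ hℓ => (hg ℓ (by omega)).1, fun ℓ hℓ => (hg ℓ (by omega)).2⟩
end

section
/- Let (P, ⊴) be a finite partial order, f an N-indiscernible coloring, A ⊆ P a maximal antichain, and t ∈ {0,1} with |{i ∈ A : f(i) = 1−t}| ≤ N. Then there exist A₀ ⊆ A with |A₀| ≤ 2N+1, and sets J⁻, J⁺ ⊆ f⁻¹(1−t) each of size ≤ N, such that for all j ∈ f⁻¹(1−t): (i) j ◁ A iff (j ◁ A₀ or j ⊴ J⁻), and (ii) A ◁ j iff (A₀ ◁ j or J⁺ ⊴ j). -/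
/-!
Split according to the color `t`. If `A` has at most `N` points of color `t`, then
`|A| ≤ 2N+1` and `A₀ = A` works. Otherwise fix `N+1` points `V ⊆ A` of color `t` and take
`A₀ = V`. A `(1−t)`-colored point below `A` lies below a maximal such point `m`; either
`m` is below `V`, or `m` belongs to `J⁻`, the set of maximal ones that are not. The set
`V ∪ J⁻` is an antichain with more than `N` points of color `t`, so indiscernibility
leaves room for at most `N` points of color `1−t` in it, i.e. `|J⁻| ≤ N`. The upper side
is the same argument in the dual order.
-/

variable {P : Type*} [PartialOrder P]

theorem ZMod.two_eq_or_eq_one_sub (x y : ZMod 2) : x = y ∨ x = 1 - y := by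
  revert x y
  decide

theorem IsAC.dual {A : Set P} (hA : IsAC A) : IsAC (P := Pᵒᵈ) A :=
  fun i hi j hj hij => hA j hj i hi hij

theorem ncard_le_of_isAC_union [Finite P] {N : ℕ} {f : P → ZMod 2}
    (hf : ∀ A : Set P, IsAC A → ∃ t : ZMod 2, (A ∩ f ⁻¹' {t}).ncard ≤ N)
    {t : ZMod 2} {V W : Set P} (hV : V ⊆ f ⁻¹' {t}) (hVN : N < V.ncard)
    (hW : W ⊆ f ⁻¹' {1 - t}) (hVW : IsAC (V ∪ W)) : W.ncard ≤ N := by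
  obtain ⟨t₀, ht₀⟩ := hf _ hVW
  rcases ZMod.two_eq_or_eq_one_sub t₀ t with rfl | rfl
  · have : V.ncard ≤ ((V ∪ W) ∩ f ⁻¹' {t₀}).ncard :=
      Set.ncard_le_ncard (Set.subset_inter Set.subset_union_left hV)
    omega
  · exact (Set.ncard_le_ncard (Set.subset_inter Set.subset_union_right hW)).trans ht₀

theorem IsAC.exists_witnesses_below [Finite P] {A A₀ C : Set P} {N : ℕ} (hA : IsAC A)
    (hA₀ : A₀ ⊆ A) (hbound : ∀ W ⊆ C, IsAC (A₀ ∪ W) → W.ncard ≤ N) :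
    ∃ J ⊆ C, J.ncard ≤ N ∧
      ∀ j ∈ C, (∃ i ∈ A, j < i) ↔ ((∃ i ∈ A₀, j < i) ∨ ∃ j' ∈ J, j ≤ j') := by
  set S : Set P := {j | j ∈ C ∧ ∃ i ∈ A, j < i}
  set J : Set P := {m | Maximal (· ∈ S) m ∧ ¬ ∃ i ∈ A₀, m < i}
  have hJS : J ⊆ S := fun m hm => hm.1.prop
  have hJ : IsAC (A₀ ∪ J) := by
    rintro x (hx | hx) y (hy | hy) hxy
    · exact hA x (hA₀ hx) y (hA₀ hy) hxy
    · obtain ⟨i, hi, hyi⟩ := (hJS hy).2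
      exact hA x (hA₀ hx) i hi (hxy.trans hyi)
    · exact hx.2 ⟨y, hy, hxy⟩
    · exact hx.1.not_gt hy.1.prop hxy
  refine ⟨J, fun m hm => (hJS hm).1, hbound J (fun m hm => (hJS hm).1) hJ, fun j hj => ?_⟩
  constructor
  · rintro ⟨i, hi, hji⟩
    obtain ⟨m, hjm, hm⟩ := Finite.exists_le_maximal (p := (· ∈ S)) ⟨hj, i, hi, hji⟩
    by_cases hmA₀ : ∃ i ∈ A₀, m < i
    · obtain ⟨i', hi', hmi'⟩ := hmA₀
      exact Or.inl ⟨i', hi', hjm.trans_lt hmi'⟩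
    · exact Or.inr ⟨m, ⟨hm, hmA₀⟩, hjm⟩
  · rintro (⟨i, hi, hji⟩ | ⟨j', hj', hjj'⟩)
    · exact ⟨i, hA₀ hi, hji⟩
    · obtain ⟨i, hi, hj'i⟩ := (hJS hj').2
      exact ⟨i, hi, hjj'.trans_lt hj'i⟩

theorem IsAC.exists_witnesses_above [Finite P] {A A₀ C : Set P} {N : ℕ} (hA : IsAC A)
    (hA₀ : A₀ ⊆ A) (hbound : ∀ W ⊆ C, IsAC (A₀ ∪ W) → W.ncard ≤ N) :
    ∃ J ⊆ C, J.ncard ≤ N ∧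
      ∀ j ∈ C, (∃ i ∈ A, i < j) ↔ ((∃ i ∈ A₀, i < j) ∨ ∃ j' ∈ J, j' ≤ j) :=
  hA.dual.exists_witnesses_below (P := Pᵒᵈ) hA₀ fun W hW hA₀W => hbound W hW hA₀W.dual

/-- The antichain-fixing lemma: for a maximal antichain `A` whose minority color `1−t`
occurs at most `N` times, there are `A₀ ⊆ A` of size `≤ 2N+1` and sets `J⁻, J⁺` of
`(1−t)`-colored points of size `≤ N` deciding the relation of every `(1−t)`-colored point
to `A`. -/
theorem stmt_9 [Fintype P] (N : ℕ) (f : P → ZMod 2) (hf : IsIndiscColoring N f)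
    (A : Set P) (hA : IsMaxAC A) (t : ZMod 2)
    (hmin : (A ∩ f ⁻¹' {1 - t}).ncard ≤ N) :
    ∃ A₀ ⊆ A, A₀.ncard ≤ 2 * N + 1 ∧
      ∃ Jm ⊆ f ⁻¹' {1 - t}, Jm.ncard ≤ N ∧
        ∃ Jp ⊆ f ⁻¹' {1 - t}, Jp.ncard ≤ N ∧
          ∀ j ∈ f ⁻¹' {1 - t},
            ((∃ i ∈ A, j < i) ↔ ((∃ i ∈ A₀, j < i) ∨ ∃ j' ∈ Jm, j ≤ j')) ∧
            ((∃ i ∈ A, i < j) ↔ ((∃ i ∈ A₀, i < j) ∨ ∃ j' ∈ Jp, j' ≤ j)) := by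
  rcases le_or_gt (A ∩ f ⁻¹' {t}).ncard N with hsmall | hbig
  · have hA_split : A = A ∩ f ⁻¹' {t} ∪ A ∩ f ⁻¹' {1 - t} := by
      ext a
      have := ZMod.two_eq_or_eq_one_sub (f a) t
      simp only [Set.mem_union, Set.mem_inter_iff, Set.mem_preimage, Set.mem_singleton_iff]
      tauto
    have hAcard : A.ncard ≤ 2 * N + 1 := by
      have := Set.ncard_union_le (A ∩ f ⁻¹' {t}) (A ∩ f ⁻¹' {1 - t})
      rw [← hA_split] at this
      omega
    exact ⟨A, subset_rfl, hAcard, ∅, Set.empty_subset _, by simp, ∅, Set.empty_subset _,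
      by simp, fun j _ => by simp⟩
  · obtain ⟨V, hVt, hVcard⟩ := Set.exists_subset_card_eq hbig
    have hVA : V ⊆ A := hVt.trans Set.inter_subset_left
    have hbound : ∀ W ⊆ f ⁻¹' {1 - t}, IsAC (V ∪ W) → W.ncard ≤ N := fun W hW hVW =>
      ncard_le_of_isAC_union hf.1 (hVt.trans Set.inter_subset_right) (by omega) hW hVW
    obtain ⟨Jm, hJm, hJmN, hbelow⟩ := hA.1.exists_witnesses_below hVA hbound
    obtain ⟨Jp, hJp, hJpN, habove⟩ := hA.1.exists_witnesses_above hVA hbound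
    exact ⟨V, hVA, by omega, Jm, hJm, hJmN, Jp, hJp, hJpN,
      fun j hj => ⟨hbelow j hj, habove j hj⟩⟩
end

section
/- Let φ(x̄;ȳ) be a partitioned formula with the independence property (i.e., not dependent). Then there do NOT exist natural numbers N, K, L and formulas ψ_ℓ(ȳ; z̄₀,...,z̄_K) for ℓ < L such that for all finite partial orders (P,⊴), all Δ_{N,φ}-indiscernible sequences ⟨b̄_i : i ∈ P⟩, and all φ-types p over {b̄_i : i ∈ P}, there are ℓ < L and i₀,...,i_K ∈ P with: for all j ∈ P, φ(x̄;b̄_j) ∈ p iff ⊨ ψ_ℓ(b̄_j; b̄_{i₀},...,b̄_{i_K}). (Key counting step: if φ is independent, then for every m there is a linearly ordered Δ_{N,φ}-indiscernible sequence of length m whose underlying set is φ-independent, giving 2^m many φ-types, while uniform definitions give at most L·m^K types; since 2^m > L·m^K for large m, no uniform definition exists.) -/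
open FirstOrder

variable {L : Language} {M : Type*} [L.Structure M] {α β : Type*}

/-- A finite family of `lg(ȳ)`-tuples is `φ`-independent: every Boolean pattern on it is
realized by an instance of `φ`. -/
def PhiIndep (φ : L.Formula (α ⊕ β)) (B : Finset (β → M)) : Prop :=
  ∀ s : (β → M) → Bool, ∃ a : α → M, ∀ b ∈ B,
    (φ.Realize (Sum.elim a b) ↔ s b = true)

/-- `⟨b i : i ∈ P⟩` is `Δ_{N,φ}`-indiscernible with respect to the partial order `P`:
tuples of distinct indices with the same quantifier-free order type satisfy the same
formulas `∃x̄ ⋀_{k ≤ N} φ(x̄; z̄_k)^{s(k)}`. -/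
def DeltaIndisc (N : ℕ) (φ : L.Formula (α ⊕ β)) {P : Type*} [PartialOrder P]
    (b : P → β → M) : Prop :=
  ∀ i j : Fin (N + 1) → P, Function.Injective i → Function.Injective j →
    (∀ k l, i k ≤ i l ↔ j k ≤ j l) →
    ∀ s : Fin (N + 1) → Bool,
      ((∃ a : α → M, ∀ k, (φ.Realize (Sum.elim a (b (i k))) ↔ s k = true)) ↔
        (∃ a : α → M, ∀ k, (φ.Realize (Sum.elim a (b (j k))) ↔ s k = true)))

/-!
Enumerate a `φ`-independent set of size `m` as `b : Fin m → M^β`. Every pattern on it is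
realized, so all `Δ_{N,φ}`-formulas hold of every injective tuple from it: the sequence is
indiscernible (for any order on `Fin m`) and has `2 ^ m` distinct `φ`-types. A uniform definition
assigns to each type a formula index `ℓ < Lc` and parameters `Fin (K + 1) → Fin m` which
determine it, so `2 ^ m ≤ Lc * m ^ (K + 1)`, which fails for large `m`.
-/

lemma exists_mul_pow_lt_two_pow (c k : ℕ) : ∃ m : ℕ, c * m ^ k < 2 ^ m := by
  have hc : (0 : ℝ) < 1 / (c + 1) := by positivity
  obtain ⟨m, hm⟩ :=
    ((tendsto_pow_const_div_const_pow_of_one_lt k one_lt_two).eventually_lt_const hc).exists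
  refine ⟨m, ?_⟩
  rw [div_lt_div_iff₀ (by positivity) (by positivity), one_mul] at hm
  have hmc : (c : ℝ) * (m : ℝ) ^ k < 2 ^ m := by
    nlinarith [pow_nonneg (Nat.cast_nonneg (α := ℝ) m) k]
  exact_mod_cast hmc

lemma PhiIndep.exists_realize {φ : L.Formula (α ⊕ β)} {B : Finset (β → M)} (hB : PhiIndep φ B)
    {ι : Type*} {b : ι → β → M} (hb : Function.Injective b) (hbB : ∀ i, b i ∈ B)
    (s : ι → Bool) : ∃ a : α → M, ∀ i, (φ.Realize (Sum.elim a (b i)) ↔ s i = true) := by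
  obtain ⟨a, ha⟩ := hB (Function.extend b s fun _ => false)
  exact ⟨a, fun i => by rw [ha _ (hbB i), hb.extend_apply]⟩

lemma PhiIndep.deltaIndisc {φ : L.Formula (α ⊕ β)} {B : Finset (β → M)} (hB : PhiIndep φ B)
    (N : ℕ) {P : Type*} [PartialOrder P] {b : P → β → M} (hb : Function.Injective b)
    (hbB : ∀ i, b i ∈ B) : DeltaIndisc N φ b :=
  fun _ _ hi hj _ s =>
    iff_of_true (hB.exists_realize (hb.comp hi) (fun _ => hbB _) s)
      (hB.exists_realize (hb.comp hj) (fun _ => hbB _) s)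

lemma two_pow_card_le_of_forall_exists_iff {P ι : Type*} [Fintype P] [Fintype ι]
    (R : ι → P → Prop) (hR : ∀ s : P → Bool, ∃ c, ∀ j, s j = true ↔ R c j) :
    2 ^ Fintype.card P ≤ Fintype.card ι := by
  classical
  choose f hf using hR
  have hf_inj : Function.Injective f := fun s t hst =>
    funext fun j => Bool.eq_iff_iff.mpr ((hf s j).trans (hst ▸ (hf t j).symm))
  simpa using Fintype.card_le_of_injective f hf_inj

/-- If `φ` has the independence property (arbitrarily large `φ`-independent sets), then
there is no uniform definition of `φ`-types over finite partial order
`Δ_{N,φ}`-indiscernibles: no finite list of formulas `ψ_ℓ(ȳ; z̄₀, ..., z̄_K)` defines,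
with parameters from the sequence, every `φ`-type over every finite
`Δ_{N,φ}`-indiscernible sequence. -/
theorem stmt_12 (φ : L.Formula (α ⊕ β))
    (hIP : ∀ m : ℕ, ∃ B : Finset (β → M), B.card = m ∧ PhiIndep φ B) :
    ¬ ∃ (N K Lc : ℕ) (ψ : Fin Lc → L.Formula (β ⊕ (Fin (K + 1) × β))),
      ∀ (P : Type) (_ : Fintype P) (_ : PartialOrder P) (b : P → β → M),
        DeltaIndisc N φ b →
        ∀ s : P → Bool,
          (∃ a : α → M, ∀ i, (φ.Realize (Sum.elim a (b i)) ↔ s i = true)) →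
          ∃ (ℓ : Fin Lc) (idx : Fin (K + 1) → P), ∀ j : P,
            (s j = true ↔
              (ψ ℓ).Realize (Sum.elim (b j) (fun q => b (idx q.1) q.2))) := by
  rintro ⟨N, K, Lc, ψ, hdef⟩
  obtain ⟨m, hm⟩ := exists_mul_pow_lt_two_pow Lc (K + 1)
  obtain ⟨B, hBcard, hB⟩ := hIP m
  let b : Fin m → β → M := fun i => (B.equivFinOfCardEq hBcard).symm i
  have hb : Function.Injective b := Subtype.val_injective.comp (Equiv.injective _)
  have hbB : ∀ i, b i ∈ B := fun i => ((B.equivFinOfCardEq hBcard).symm i).2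
  have hcount := two_pow_card_le_of_forall_exists_iff
    (fun (c : Fin Lc × (Fin (K + 1) → Fin m)) j =>
      (ψ c.1).Realize (Sum.elim (b j) fun q => b (c.2 q.1) q.2))
    fun s => by
      obtain ⟨ℓ, idx, hidx⟩ := hdef (Fin m) inferInstance inferInstance b
        (hB.deltaIndisc N hb hbB) s (hB.exists_realize hb hbB s)
      exact ⟨(ℓ, idx), hidx⟩
  simp only [Fintype.card_fin, Fintype.card_prod, Fintype.card_fun] at hcount
  exact hm.not_ge hcount
end

section
/- Let (P, ⊴) be a finite partial order, f an N-indiscernible coloring, t ∈ {0,1}, and let A, A' be antichains with A ⊆ f⁻¹(1−t), A' ⊆ f⁻¹(t), |A| > (2N+1)(N+1), |A'| > (2N+1)(N+1), and every element of A strictly below every element of a fixed maximal antichain A* while every element of A' is weakly above A*. Then there exist i ∈ A and i' ∈ A' with i ◁ i'. -/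
variable {P : Type*} [PartialOrder P]

theorem ZMod.eq_or_eq_of_ne_two {a b : ZMod 2} (hab : a ≠ b) (c : ZMod 2) : c = a ∨ c = b := by
  revert a b c; decide

theorem IsAC.not_lt_of_mem_dcl {C : Set P} (hC : IsAC C) {i j : P} (hi : i ∈ dcl C)
    (hj : j ∈ C ∪ ucl C) : ¬ j < i := by
  obtain ⟨k, hk, hik⟩ := hi
  rcases hj with hj | ⟨k', hk', hk'j⟩
  · exact fun hji => hC j hj k hk (hji.trans hik)
  · exact fun hji => hC k' hk' k hk (hk'j.trans (hji.trans hik))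

theorem IsAC.exists_lt_of_not_isAC_union {A B : Set P} (hA : IsAC A) (hB : IsAC B)
    (hBA : ∀ j ∈ B, ∀ i ∈ A, ¬ j < i) (hAB : ¬ IsAC (A ∪ B)) : ∃ i ∈ A, ∃ j ∈ B, i < j := by
  simp only [IsAC, not_forall, not_not] at hAB
  obtain ⟨i, hi | hi, j, hj | hj, hij⟩ := hAB
  · exact absurd hij (hA i hi j hj)
  · exact ⟨i, hi, j, hj, hij⟩
  · exact absurd hij (hBA i hi j hj)
  · exact absurd hij (hB i hi j hj)

theorem Set.ncard_le_ncard_inter_preimage {α β : Type*} {A B : Set α} {f : α → β} {s : β}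
    (hAB : A ⊆ B) (hA : A ⊆ f ⁻¹' {s}) (hB : B.Finite) : A.ncard ≤ (B ∩ f ⁻¹' {s}).ncard :=
  Set.ncard_le_ncard (Set.subset_inter hAB hA) (hB.inter_of_left _)

theorem IsIndiscColoring.not_isAC_union {N : ℕ} {f : P → ZMod 2} (hf : IsIndiscColoring N f)
    {A B : Set P} {s t : ZMod 2} (hst : s ≠ t) (hAcol : A ⊆ f ⁻¹' {s}) (hBcol : B ⊆ f ⁻¹' {t})
    (hAcard : N < A.ncard) (hBcard : N < B.ncard) : ¬ IsAC (A ∪ B) := by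
  intro hAB
  obtain ⟨c, hc⟩ := hf.1 _ hAB
  have hfin : (A ∪ B).Finite :=
    (Set.finite_of_ncard_pos (by omega)).union (Set.finite_of_ncard_pos (by omega))
  rcases ZMod.eq_or_eq_of_ne_two hst c with rfl | rfl
  · have := Set.ncard_le_ncard_inter_preimage Set.subset_union_left hAcol hfin
    omega
  · have := Set.ncard_le_ncard_inter_preimage Set.subset_union_right hBcol hfin
    omega

theorem stmt_17_general (N : ℕ) (f : P → ZMod 2) (hf : IsIndiscColoring N f)
    (t : ZMod 2) (A A' Astar : Set P)
    (hA : IsAC A) (hA' : IsAC A') (hAstar : IsMaxAC Astar)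
    (hAcol : A ⊆ f ⁻¹' {1 - t}) (hA'col : A' ⊆ f ⁻¹' {t})
    (hAcard : (2 * N + 1) * (N + 1) < A.ncard)
    (hA'card : (2 * N + 1) * (N + 1) < A'.ncard)
    (hbelow : ∀ i ∈ A, ∃ k ∈ Astar, i < k)
    (habove : ∀ i' ∈ A', i' ∈ Astar ∨ ∃ k ∈ Astar, k < i') :
    ∃ i ∈ A, ∃ i' ∈ A', i < i' := by
  have hN : N < (2 * N + 1) * (N + 1) := by nlinarith
  have hcol : 1 - t ≠ t := (by decide : ∀ s : ZMod 2, 1 - s ≠ s) t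
  have hnotAC : ¬ IsAC (A ∪ A') := hf.not_isAC_union hcol hAcol hA'col (by omega) (by omega)
  exact hA.exists_lt_of_not_isAC_union hA'
    (fun i' hi' i hi => hAstar.1.not_lt_of_mem_dcl (hbelow i hi) (habove i' hi')) hnotAC

/-- The comparability step of Lemma 3.9: two large monochromatic antichains of opposite
colors, one strictly below and one weakly above a fixed maximal antichain, contain a
comparable pair. -/
theorem stmt_17 [Fintype P] (N : ℕ) (f : P → ZMod 2) (hf : IsIndiscColoring N f)
    (t : ZMod 2) (A A' Astar : Set P)
    (hA : IsAC A) (hA' : IsAC A') (hAstar : IsMaxAC Astar)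
    (hAcol : A ⊆ f ⁻¹' {1 - t}) (hA'col : A' ⊆ f ⁻¹' {t})
    (hAcard : (2 * N + 1) * (N + 1) < A.ncard)
    (hA'card : (2 * N + 1) * (N + 1) < A'.ncard)
    (hbelow : ∀ i ∈ A, ∃ k ∈ Astar, i < k)
    (habove : ∀ i' ∈ A', i' ∈ Astar ∨ ∃ k ∈ Astar, k < i') :
    ∃ i ∈ A, ∃ i' ∈ A', i < i' :=
  stmt_17_general N f hf t A A' Astar hA hA' hAstar hAcol hA'col hAcard hA'card hbelow habove
end

section
/- Let (P, ⊴) be a finite partial order, f an N-indiscernible coloring, t ∈ {0,1}, and suppose for contradiction that there are maximal antichains A₀ ◁ A₁ ◁ ... ◁ A_{2N+1} of P such that each A_n contains a subset A*_n of elements of color n mod 2 with the property that every element of A*_n (n ≥ 1) lies strictly above some element of A*_{n-1}, and A*_{2N+1} is nonempty. Then there is a chain i₀ ◁ i₁ ◁ ... ◁ i_{2N+1} with f(i_ℓ) ≡ ℓ (mod 2) for all ℓ, contradicting condition (ii) of N-indiscernible colorings. Hence no such tower of 2N+2 antichains exists. -/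
variable {P : Type*} [PartialOrder P]

theorem exists_chain_of_forall_exists_pred {α : Type*} (r : α → α → Prop) {S : ℕ → Set α}
    {M : ℕ} (hpred : ∀ n < M, ∀ x ∈ S (n + 1), ∃ y ∈ S n, r y x) {x : α} (hx : x ∈ S M) :
    ∃ g : ℕ → α, g M = x ∧ (∀ ℓ ≤ M, g ℓ ∈ S ℓ) ∧ ∀ ℓ < M, r (g ℓ) (g (ℓ + 1)) := by
  induction M generalizing x with
  | zero =>
    exact ⟨fun _ => x, rfl, fun ℓ hℓ => by rwa [Nat.le_zero.mp hℓ],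
      fun ℓ hℓ => absurd hℓ ℓ.not_lt_zero⟩
  | succ M ih =>
    obtain ⟨y, hy, hyx⟩ := hpred M M.lt_succ_self x hx
    obtain ⟨g, rfl, hgS, hgr⟩ := ih (fun n hn => hpred n (Nat.lt_succ_of_lt hn)) hy
    refine ⟨Function.update g (M + 1) x, Function.update_self .., fun ℓ hℓ => ?_, fun ℓ hℓ => ?_⟩
    · rcases hℓ.lt_or_eq with hlt | rfl
      · rw [Function.update_of_ne hlt.ne]
        exact hgS ℓ (Nat.lt_succ_iff.mp hlt)
      · rwa [Function.update_self]
    · rw [Function.update_of_ne (by omega)]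
      rcases Nat.lt_succ_iff_lt_or_eq.mp hℓ with hlt | rfl
      · rw [Function.update_of_ne (by omega)]
        exact hgr ℓ hlt
      · rwa [Function.update_self]

theorem stmt_18_general (N : ℕ) (f : P → ZMod 2) (hf : IsIndiscColoring N f) :
    ¬ ∃ A Astar : ℕ → Set P,
      (∀ n ≤ 2 * N + 1, IsMaxAC (A n)) ∧
      (∀ n, n + 1 ≤ 2 * N + 1 →
        A n ⊆ dcl (A (n + 1)) ∪ A (n + 1) ∧ A n ≠ A (n + 1)) ∧
      (∀ n ≤ 2 * N + 1, Astar n ⊆ A n ∧ ∀ i ∈ Astar n, f i = (n : ZMod 2)) ∧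
      (∀ n, 1 ≤ n → n ≤ 2 * N + 1 → ∀ i ∈ Astar n, ∃ i' ∈ Astar (n - 1), i' < i) ∧
      (Astar (2 * N + 1)).Nonempty := by
  rintro ⟨_, Astar, -, -, hcol, hdown, x, hx⟩
  obtain ⟨g, -, hgS, hglt⟩ := exists_chain_of_forall_exists_pred (· < ·)
    (fun n hn x hx => hdown (n + 1) n.succ_pos hn x hx) hx
  refine hf.2 ⟨g, hglt, fun ℓ hℓ => ?_⟩
  have hcur : f (g ℓ) = ℓ := (hcol ℓ hℓ.le).2 _ (hgS ℓ hℓ.le)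
  have hnext : f (g (ℓ + 1)) = ℓ + 1 := by
    rw [(hcol (ℓ + 1) hℓ).2 _ (hgS (ℓ + 1) hℓ), Nat.cast_succ]
  rw [hcur, hnext]
  exact left_ne_add.mpr one_ne_zero

/-- The termination argument of Lemma 2.9: there is no tower of `2N+2` maximal antichains
`A 0 ◁ ... ◁ A (2N+1)` carrying subsets `A* n` of color `n mod 2` such that every element
of `A* n` (for `n ≥ 1`) lies strictly above some element of `A* (n-1)` and `A* (2N+1)` is
nonempty; otherwise one extracts a chain alternating colors at every step. -/
theorem stmt_18 [Fintype P] (N : ℕ) (f : P → ZMod 2) (hf : IsIndiscColoring N f) :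
    ¬ ∃ A Astar : ℕ → Set P,
      (∀ n ≤ 2 * N + 1, IsMaxAC (A n)) ∧
      (∀ n, n + 1 ≤ 2 * N + 1 →
        A n ⊆ dcl (A (n + 1)) ∪ A (n + 1) ∧ A n ≠ A (n + 1)) ∧
      (∀ n ≤ 2 * N + 1, Astar n ⊆ A n ∧ ∀ i ∈ Astar n, f i = (n : ZMod 2)) ∧
      (∀ n, 1 ≤ n → n ≤ 2 * N + 1 → ∀ i ∈ Astar n, ∃ i' ∈ Astar (n - 1), i' < i) ∧
      (Astar (2 * N + 1)).Nonempty :=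
  stmt_18_general N f hf
end

section
/- Let X be the set {0,1,2,3,4} and Y = {{0}, {0,1,2}, {2,3,4}, {4}} ⊆ 𝒫(X), with the membership relation R(x,y) ⟺ x ∈ y between X and Y. Then there is no partial order ⊴ on Y making ⟨y : y ∈ Y⟩ a Δ_{1,R}-indiscernible sequence. (In particular: any such order must make {0} and {0,1,2} comparable, must make {0,1,2} and {2,3,4} incomparable, must make {0} and {4} incomparable, yet the pairs ({0,1,2},{2,3,4}) and ({0},{4}) have different Δ_{1,R}-types since the first pair intersects and the second does not — a contradiction.) -/
/-- The family `Y = {{0}, {0,1,2}, {2,3,4}, {4}}` of subsets of `X = {0,1,2,3,4}`. -/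
def Ysets : Fin 4 → Set (Fin 5)
  | 0 => {0}
  | 1 => {0, 1, 2}
  | 2 => {2, 3, 4}
  | 3 => {4}

/-!
A partial order has only three order types of pairs of distinct elements (`<`, `>`,
incomparable), and for an indiscernible sequence the Δ-type of a pair depends only on its order
type. But the pairs `({0},{0,1,2})`, `({0,1,2},{0})`, `({0},{2,3,4})`, `({0,1,2},{2,3,4})` each
leave a different one of the four regions empty, so they have four distinct Δ-types.
-/

section Indiscernible

variable {ι X : Type*}

/-- `s ∈ deltaType Y i` iff `∃ x (R(x, Y (i 0))^{s 0} ∧ R(x, Y (i 1))^{s 1})` holds. -/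
def deltaType (Y : ι → Set X) (i : Fin 2 → ι) : Set (Fin 2 → Bool) :=
  {s | ∃ x, ∀ k, (x ∈ Y (i k) ↔ s k = true)}

def IsDeltaIndiscernible (le : ι → ι → Prop) (Y : ι → Set X) : Prop :=
  ∀ i j : Fin 2 → ι, Function.Injective i → Function.Injective j →
    (∀ k l, le (i k) (i l) ↔ le (j k) (j l)) → ∀ s, s ∈ deltaType Y i ↔ s ∈ deltaType Y j

lemma IsDeltaIndiscernible.deltaType_eq {le : ι → ι → Prop} {Y : ι → Set X}
    (H : IsDeltaIndiscernible le Y) [Std.Refl le] {a b c d : ι} (hab : a ≠ b) (hcd : c ≠ d)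
    (h₁ : le a b ↔ le c d) (h₂ : le b a ↔ le d c) : deltaType Y ![a, b] = deltaType Y ![c, d] := by
  ext s
  refine H _ _ (injective_pair_iff_ne.mpr hab) (injective_pair_iff_ne.mpr hcd) ?_ s
  simp [Fin.forall_fin_two, h₁, h₂, refl]

lemma exists_ne_iff_of_three_lt_card {κ : Type*} [Fintype κ] (hκ : 3 < Fintype.card κ)
    (le : ι → ι → Prop) [Std.Antisymm le] (a b : κ → ι) (hab : ∀ k, a k ≠ b k) :
    ∃ k l, k ≠ l ∧ (le (a k) (b k) ↔ le (a l) (b l)) ∧ (le (b k) (a k) ↔ le (b l) (a l)) := by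
  classical
  let orderType : κ → {q : Bool × Bool // q ≠ (true, true)} := fun k =>
    ⟨(decide (le (a k) (b k)), decide (le (b k) (a k))), fun h => by
      simp only [Prod.mk.injEq, decide_eq_true_eq] at h
      exact hab k (antisymm h.1 h.2)⟩
  obtain ⟨k, l, hkl, h⟩ := Fintype.exists_ne_map_eq_of_card_lt orderType (by simpa using hκ)
  simp only [orderType, Subtype.mk.injEq, Prod.mk.injEq, decide_eq_decide] at h
  exact ⟨k, l, hkl, h⟩

theorem not_isDeltaIndiscernible_of_injective_deltaType {κ : Type*} [Fintype κ]
    (hκ : 3 < Fintype.card κ) {le : ι → ι → Prop} [Std.Refl le] [Std.Antisymm le]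
    {Y : ι → Set X} (a b : κ → ι) (hab : ∀ k, a k ≠ b k)
    (hY : Function.Injective fun k => deltaType Y ![a k, b k]) :
    ¬ IsDeltaIndiscernible le Y := by
  intro H
  obtain ⟨k, l, hkl, h₁, h₂⟩ := exists_ne_iff_of_three_lt_card hκ le a b hab
  exact hkl (hY (H.deltaType_eq (hab k) (hab l) h₁ h₂))

end Indiscernible

lemma Ysets_eq_coe (i : Fin 4) :
    Ysets i = ↑(![{0}, {0, 1, 2}, {2, 3, 4}, {4}] i : Finset (Fin 5)) := by
  fin_cases i <;> ext <;> simp [Ysets]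

lemma deltaType_Ysets : ∀ k : Fin 4,
    deltaType Ysets ![![0, 1, 0, 1] k, ![1, 0, 2, 2] k] =
      {![![true, false], ![false, true], ![true, true], ![false, false]] k}ᶜ := by
  simp only [Set.ext_iff, deltaType, Ysets_eq_coe, Finset.mem_coe, Set.mem_ofPred_eq]
  decide

/-- Example 4.1: there is no partial order `⊴` on `Y` making `⟨y : y ∈ Y⟩` a
`Δ_{1,R}`-indiscernible sequence, where `R(x,y) ⟺ x ∈ y`: Δ-indiscernibility requires
pairs of distinct indices with the same quantifier-free order type to realize the same
formulas `∃x (R(x,z₀)^{s(0)} ∧ R(x,z₁)^{s(1)})`. -/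
theorem stmt_19 :
    ¬ ∃ le : Fin 4 → Fin 4 → Prop, IsPartialOrder (Fin 4) le ∧
      ∀ i j : Fin 2 → Fin 4, Function.Injective i → Function.Injective j →
        (∀ k l, le (i k) (i l) ↔ le (j k) (j l)) →
        ∀ s : Fin 2 → Bool,
          ((∃ x : Fin 5, ∀ k, (x ∈ Ysets (i k) ↔ s k = true)) ↔
            (∃ x : Fin 5, ∀ k, (x ∈ Ysets (j k) ↔ s k = true))) := by
  rintro ⟨le, hle, H⟩
  refine not_isDeltaIndiscernible_of_injective_deltaType (κ := Fin 4) (le := le) (by simp)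
    ![0, 1, 0, 1] ![1, 0, 2, 2] (by decide) ?_ H
  intro k l h
  simp only [deltaType_Ysets, compl_inj_iff, Set.singleton_eq_singleton_iff] at h
  revert k l; decide
end
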